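/- Let λ ≥ 1 be an integer, k = 2(λ+1), q ≥ 1, and f ∈ Lᵠ(ℝ). Let D₁ ≥ 1 and E₀ > 0, and let v, ξ : ℝ → ℝ be measurable functions such that 1/D₁ ≤ ξ(Y) ≤ D₁ and |v(Y)| ≤ 5π/6 for a.e. Y, and ∫_ℝ ξ(Y) sin²(v(Y)/2) cos^{2λ}(v(Y)/2) dY ≤ E₀. Set α := cos^{2(λ+1)}(5π/12) and β := (18·4^λ/(2−√3)^λ)·D₁E₀. Define (Λf)(Y) := ∫_ℝ exp( −| ∫_Y^{Y'} cos^k(v(s)/2)·ξ(s) ds | ) f(Y') dY'. Then ‖Λf‖_{Lᵠ(ℝ)} ≤ ‖h‖_{L¹(ℝ)} · ‖f‖_{Lᵠ(ℝ)}, where h(z) := min{ 1, exp( (α/D₁)(β − |z|) ) }, and moreover ‖h‖_{L¹(ℝ)} = (36·4^λ/(2−√3)^λ)·D₁E₀ + 2D₁/α. -/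

import Mathlib

/-!
Since `|v| ≤ 5π/6` gives `cos (v/2) ≥ cos (5π/12)` and `ξ ≥ 1/D₁`, the phase
`∫_Y^{Y'} cos^k (v/2) ξ` grows at least like `(α/D₁)|Y' - Y|`, so the kernel of `Λ` is dominated
by `exp (-(α/D₁)|Y - Y'|) ≤ h (Y - Y')`. Young's inequality for convolution with the integrable
`h` (Hölder for the measure `h (x - y) dy`, then Tonelli and translation invariance) gives the
`Lᵠ` bound, and `‖h‖₁ = 2β + 2D₁/α` is computed directly: `h = 1` on `[-β, β]` and decays
exponentially outside.
-/

open MeasureTheory ENNReal Set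

theorem ENNReal.lintegral_mul_rpow_le {α : Type*} [MeasurableSpace α] {μ : Measure α}
    {w F : α → ℝ≥0∞} (hw : AEMeasurable w μ) (hF : AEMeasurable F μ) {q : ℝ} (hq : 1 ≤ q) :
    (∫⁻ a, w a * F a ∂μ) ^ q ≤ (∫⁻ a, w a ∂μ) ^ (q - 1) * ∫⁻ a, w a * F a ^ q ∂μ := by
  have hq0 : 0 < q := zero_lt_one.trans_le hq
  have hexp : 0 ≤ 1 - 1 / q := sub_nonneg.2 ((div_le_one hq0).2 hq)
  have holder := ENNReal.lintegral_mul_norm_pow_le hw (hw.mul (hF.pow_const q)) hexp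
    (by positivity) (sub_add_cancel 1 (1 / q))
  have hsplit : ∀ a, w a ^ (1 - 1 / q) * (w a * F a ^ q) ^ (1 / q) = w a * F a := fun a => by
    rw [ENNReal.mul_rpow_of_nonneg _ _ (by positivity), ← ENNReal.rpow_mul,
      mul_one_div_cancel hq0.ne', ENNReal.rpow_one, ← mul_assoc,
      ← ENNReal.rpow_add_of_nonneg _ _ hexp (by positivity), sub_add_cancel, ENNReal.rpow_one]
  simp only [Pi.mul_apply, hsplit] at holder
  calc (∫⁻ a, w a * F a ∂μ) ^ q
      ≤ ((∫⁻ a, w a ∂μ) ^ (1 - 1 / q) * (∫⁻ a, w a * F a ^ q ∂μ) ^ (1 / q)) ^ q :=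
        ENNReal.rpow_le_rpow holder hq0.le
    _ = (∫⁻ a, w a ∂μ) ^ (q - 1) * ∫⁻ a, w a * F a ^ q ∂μ := by
        rw [ENNReal.mul_rpow_of_nonneg _ _ hq0.le, ← ENNReal.rpow_mul, ← ENNReal.rpow_mul,
          one_div_mul_cancel hq0.ne', ENNReal.rpow_one, sub_mul, one_mul,
          one_div_mul_cancel hq0.ne']

section Convolution

variable {G : Type*} [AddGroup G] [MeasurableSpace G] [MeasurableAdd G] [MeasurableNeg G]
  [MeasurableSub₂ G] {μ : Measure G} [SFinite μ] [μ.IsAddLeftInvariant] [μ.IsAddRightInvariant]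
  [μ.IsNegInvariant]

theorem lintegral_convolution_rpow_le {H F : G → ℝ≥0∞} (hH : Measurable H)
    (hF : AEMeasurable F μ) {q : ℝ} (hq : 1 ≤ q) :
    ∫⁻ x, (∫⁻ y, H (x - y) * F y ∂μ) ^ q ∂μ ≤ (∫⁻ z, H z ∂μ) ^ q * ∫⁻ y, F y ^ q ∂μ := by
  set A := ∫⁻ z, H z ∂μ
  have hkernel : AEMeasurable (Function.uncurry fun x y => H (x - y) * F y ^ q) (μ.prod μ) :=
    (hH.comp measurable_sub).aemeasurable.mul
      ((hF.pow_const q).comp_quasiMeasurePreserving Measure.quasiMeasurePreserving_snd)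
  calc ∫⁻ x, (∫⁻ y, H (x - y) * F y ∂μ) ^ q ∂μ
      ≤ ∫⁻ x, A ^ (q - 1) * ∫⁻ y, H (x - y) * F y ^ q ∂μ ∂μ := lintegral_mono fun x => by
        simpa only [lintegral_sub_left_eq_self H x] using ENNReal.lintegral_mul_rpow_le
          (w := fun y => H (x - y)) (hH.comp (measurable_const.sub measurable_id)).aemeasurable
          hF hq
    _ = A ^ (q - 1) * ∫⁻ y, (∫⁻ x, H (x - y) ∂μ) * F y ^ q ∂μ := by
        rw [lintegral_const_mul'' _ (f := fun x => ∫⁻ y, H (x - y) * F y ^ q ∂μ)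
          hkernel.lintegral_prod_right', lintegral_lintegral_swap hkernel]
        congr 1
        exact lintegral_congr fun y => lintegral_mul_const _ (hH.comp (measurable_id.sub_const y))
    _ = A ^ q * ∫⁻ y, F y ^ q ∂μ := by
        simp_rw [lintegral_sub_right_eq_self H, lintegral_const_mul'' _ (hF.pow_const q),
          ← mul_assoc]
        conv_lhs => rw [← ENNReal.rpow_one (∫⁻ x, H x ∂μ),
          ← ENNReal.rpow_add_of_nonneg _ _ (sub_nonneg.2 hq) zero_le_one, sub_add_cancel]

theorem eLpNorm_integral_mul_le_of_abs_le {K : G → G → ℝ} {h f : G → ℝ} (hh : Measurable h)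
    (hh_int : Integrable h μ) (hK : ∀ x y, |K x y| ≤ h (x - y)) (hf : AEStronglyMeasurable f μ)
    {p : ℝ≥0∞} (hp : 1 ≤ p) (hp_top : p ≠ ∞) :
    eLpNorm (fun x => ∫ y, K x y * f y ∂μ) p μ ≤ ENNReal.ofReal (∫ z, h z ∂μ) * eLpNorm f p μ := by
  have hh0 : ∀ z, 0 ≤ h z := fun z => (abs_nonneg _).trans (by simpa using hK z 0)
  have hp0 : p ≠ 0 := (zero_lt_one.trans_le hp).ne'
  have hq : 1 ≤ p.toReal := by
    simpa using ENNReal.toReal_mono hp_top hp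
  have hq0 : 0 < p.toReal := zero_lt_one.trans_le hq
  have hpointwise : ∀ x, ‖∫ y, K x y * f y ∂μ‖ₑ ≤ ∫⁻ y, ENNReal.ofReal (h (x - y)) * ‖f y‖ₑ ∂μ :=
    fun x => (enorm_integral_le_lintegral_enorm _).trans <| lintegral_mono fun y => by
      rw [enorm_mul, Real.enorm_eq_ofReal_abs]
      gcongr
      exact hK x y
  rw [ofReal_integral_eq_lintegral_ofReal hh_int (ae_of_all _ hh0),
    eLpNorm_eq_lintegral_rpow_enorm_toReal hp0 hp_top,
    eLpNorm_eq_lintegral_rpow_enorm_toReal hp0 hp_top]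
  calc (∫⁻ x, ‖∫ y, K x y * f y ∂μ‖ₑ ^ p.toReal ∂μ) ^ (1 / p.toReal)
      ≤ (∫⁻ x, (∫⁻ y, ENNReal.ofReal (h (x - y)) * ‖f y‖ₑ ∂μ) ^ p.toReal ∂μ) ^ (1 / p.toReal) := by
        gcongr with x
        exact hpointwise x
    _ ≤ ((∫⁻ z, ENNReal.ofReal (h z) ∂μ) ^ p.toReal * ∫⁻ y, ‖f y‖ₑ ^ p.toReal ∂μ)
          ^ (1 / p.toReal) := by
        gcongr
        exact lintegral_convolution_rpow_le (ENNReal.measurable_ofReal.comp hh) hf.enorm hq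
    _ = (∫⁻ z, ENNReal.ofReal (h z) ∂μ) * (∫⁻ y, ‖f y‖ₑ ^ p.toReal ∂μ) ^ (1 / p.toReal) := by
        rw [ENNReal.mul_rpow_of_nonneg _ _ (by positivity), ← ENNReal.rpow_mul,
          mul_one_div_cancel hq0.ne', ENNReal.rpow_one]

end Convolution

section Kernel

open Real

variable {b c : ℝ}

theorem integrable_exp_neg_mul_abs (hc : 0 < c) : Integrable fun z : ℝ => exp (-(c * |z|)) := by
  rw [← integrableOn_univ, ← Iic_union_Ioi (a := 0)]
  refine IntegrableOn.union ?_ ?_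
  · refine (integrableOn_exp_mul_Iic hc 0).congr_fun (fun z hz => ?_) measurableSet_Iic
    rw [abs_of_nonpos hz, mul_neg, neg_neg]
  · refine (integrableOn_exp_mul_Ioi (neg_neg_of_pos hc) 0).congr_fun (fun z hz => ?_)
      measurableSet_Ioi
    dsimp only
    rw [abs_of_pos hz, neg_mul]

theorem integrable_min_one_exp_mul_sub_abs (hc : 0 < c) (b : ℝ) :
    Integrable fun z : ℝ => min 1 (exp (c * (b - |z|))) := by
  refine ((integrable_exp_neg_mul_abs hc).const_mul (exp (c * b))).mono' (by fun_prop)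
    (ae_of_all _ fun z => ?_)
  rw [norm_of_nonneg (le_min zero_le_one (exp_pos _).le), ← exp_add]
  exact (min_le_right _ _).trans_eq (by ring_nf)

theorem exp_neg_mul_abs_le_min_one_exp (hc : 0 ≤ c) (hb : 0 ≤ b) (z : ℝ) :
    exp (-(c * |z|)) ≤ min 1 (exp (c * (b - |z|))) :=
  le_min (exp_le_one_iff.2 (neg_nonpos.2 (by positivity)))
    (exp_le_exp.2 (by nlinarith [abs_nonneg z]))

theorem integral_min_one_exp_mul_sub_abs (hc : 0 < c) (hb : 0 ≤ b) :
    ∫ z : ℝ, min 1 (exp (c * (b - |z|))) = 2 * b + 2 / c := by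
  set g : ℝ → ℝ := fun z => min 1 (exp (c * (b - z)))
  have hg : Continuous g := by fun_prop
  have hplateau : ∫ z in Ioc 0 b, g z = b := by
    rw [setIntegral_congr_fun measurableSet_Ioc (g := fun _ => 1) fun z hz =>
      min_eq_left (one_le_exp (mul_nonneg hc.le (sub_nonneg.2 hz.2)))]
    simp [hb]
  have htail : ∫ z in Ioi b, g z = 1 / c := by
    rw [setIntegral_congr_fun measurableSet_Ioi (g := fun z => exp (c * b) * exp (-c * z))
      fun z hz => by
        show min 1 (exp (c * (b - z))) = exp (c * b) * exp (-c * z)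
        rw [min_eq_right (exp_le_one_iff.2
          (mul_nonpos_of_nonneg_of_nonpos hc.le (sub_nonpos.2 hz.le))), ← exp_add]
        ring_nf,
      integral_const_mul, integral_exp_mul_Ioi (neg_neg_of_pos hc), neg_div_neg_eq,
      ← mul_div_assoc, ← exp_add, show c * b + -c * b = 0 by ring, exp_zero]
  have htail_int : IntegrableOn g (Ioi b) :=
    (integrable_min_one_exp_mul_sub_abs hc b).integrableOn.congr_fun
      (fun z hz => by simp only [g, abs_of_pos (hb.trans_lt hz)]) measurableSet_Ioi
  rw [integral_comp_abs (f := g), ← Ioc_union_Ioi_eq_Ioi hb,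
    setIntegral_union (Ioc_disjoint_Ioi le_rfl) measurableSet_Ioi
      (hg.integrableOn_Icc.mono_set Ioc_subset_Icc_self) htail_int, hplateau, htail]
  ring

end Kernel

section Phase

open Real

theorem mul_abs_sub_le_abs_intervalIntegral {g : ℝ → ℝ} {c : ℝ}
    (hg : ∀ a b, IntervalIntegrable g volume a b) (hcg : ∀ᵐ s, c ≤ g s) (a b : ℝ) :
    c * |b - a| ≤ |∫ s in a..b, g s| := by
  wlog hab : a ≤ b generalizing a b
  · simpa only [abs_sub_comm, intervalIntegral.integral_symm a b, abs_neg] using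
      this b a (le_of_not_ge hab)
  calc c * |b - a| = ∫ _ in a..b, c := by
        rw [intervalIntegral.integral_const, abs_of_nonneg (sub_nonneg.2 hab), smul_eq_mul,
          mul_comm]
    _ ≤ ∫ s in a..b, g s := intervalIntegral.integral_mono_ae hab intervalIntegrable_const
        (hg a b) hcg
    _ ≤ |∫ s in a..b, g s| := le_abs_self _

theorem cos_pow_div_le_cos_half_pow_mul {θ x y D : ℝ} (n : ℕ) (hθ : θ ≤ π / 2)
    (hx : |x| ≤ 2 * θ) (hD : 0 ≤ D) (hy : 1 / D ≤ y) : cos θ ^ n / D ≤ cos (x / 2) ^ n * y := by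
  have hθ0 : 0 ≤ θ := by linarith [abs_nonneg x]
  have hcosθ : 0 ≤ cos θ := cos_nonneg_of_mem_Icc ⟨by linarith [pi_pos], hθ⟩
  have hcos : cos θ ≤ cos (x / 2) := by
    rw [← cos_abs (x / 2)]
    exact cos_le_cos_of_nonneg_of_le_pi (abs_nonneg _) (by linarith [pi_pos])
      (by rw [abs_div, abs_two]; linarith)
  rw [div_eq_mul_one_div]
  exact mul_le_mul (pow_le_pow_left₀ hcosθ hcos n) hy (by positivity)
    (pow_nonneg (hcosθ.trans hcos) n)

theorem abs_cos_pow_mul_le_abs (x y : ℝ) (n : ℕ) : |cos x ^ n * y| ≤ |y| := by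
  rw [abs_mul, abs_pow]
  exact mul_le_of_le_one_left (abs_nonneg _) (pow_le_one₀ (abs_nonneg _) (abs_cos_le_one _))

end Phase

theorem singular_integral_estimate_weighted_general (lam k : ℕ)
    (hk : k = 2 * (lam + 1)) (q D₁ E₀ : ℝ) (hq : 1 ≤ q) (hD : 1 ≤ D₁) (hE : 0 < E₀)
    (f v ξ : ℝ → ℝ) (hf : MemLp f (ENNReal.ofReal q) (volume : Measure ℝ))
    (hv : Measurable v) (hξ : Measurable ξ)
    (hξbd : ∀ᵐ Y ∂(volume : Measure ℝ), 1 / D₁ ≤ ξ Y ∧ ξ Y ≤ D₁)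
    (hvbd : ∀ᵐ Y ∂(volume : Measure ℝ), |v Y| ≤ 5 * Real.pi / 6) :
    eLpNorm (fun Y : ℝ => ∫ Y' : ℝ,
        Real.exp (-|∫ s in Y..Y', Real.cos (v s / 2) ^ k * ξ s|) * f Y')
      (ENNReal.ofReal q) (volume : Measure ℝ)
      ≤ ENNReal.ofReal
          (∫ z : ℝ, min 1 (Real.exp ((Real.cos (5 * Real.pi / 12) ^ (2 * (lam + 1)) / D₁)
            * ((18 * 4 ^ lam / (2 - Real.sqrt 3) ^ lam) * D₁ * E₀ - |z|))))
        * eLpNorm f (ENNReal.ofReal q) (volume : Measure ℝ) ∧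
    (∫ z : ℝ, min 1 (Real.exp ((Real.cos (5 * Real.pi / 12) ^ (2 * (lam + 1)) / D₁)
        * ((18 * 4 ^ lam / (2 - Real.sqrt 3) ^ lam) * D₁ * E₀ - |z|))))
      = (36 * 4 ^ lam / (2 - Real.sqrt 3) ^ lam) * D₁ * E₀
        + 2 * D₁ / Real.cos (5 * Real.pi / 12) ^ (2 * (lam + 1)) := by
  subst hk
  set α := Real.cos (5 * Real.pi / 12) ^ (2 * (lam + 1))
  set β := 18 * 4 ^ lam / (2 - Real.sqrt 3) ^ lam * D₁ * E₀
  set g : ℝ → ℝ := fun s => Real.cos (v s / 2) ^ (2 * (lam + 1)) * ξ s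
  have hD₁ : 0 < D₁ := zero_lt_one.trans_le hD
  have hα : 0 < α := pow_pos (Real.cos_pos_of_mem_Ioo
    ⟨by linarith [Real.pi_pos], by linarith [Real.pi_pos]⟩) _
  have hβ : 0 ≤ β := by
    have : 0 < 2 - Real.sqrt 3 := sub_pos.2 ((Real.sqrt_lt' two_pos).2 (by norm_num))
    positivity
  have hc : 0 < α / D₁ := div_pos hα hD₁
  have hg_lower : ∀ᵐ s, α / D₁ ≤ g s := by
    filter_upwards [hξbd, hvbd] with s hξs hvs
    exact cos_pow_div_le_cos_half_pow_mul _ (by linarith [Real.pi_pos]) (by linarith) hD₁.le hξs.1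
  have hg_int : ∀ a b, IntervalIntegrable g volume a b := fun a b =>
    intervalIntegrable_const.mono_fun' (by fun_prop : Measurable g).aestronglyMeasurable
      (ae_restrict_of_ae (hξbd.mono fun s hs => (abs_cos_pow_mul_le_abs _ _ _).trans
        (abs_le.2 ⟨by linarith [one_div_pos.2 hD₁], hs.2⟩)))
  refine ⟨eLpNorm_integral_mul_le_of_abs_le (by fun_prop)
    (integrable_min_one_exp_mul_sub_abs hc β) (fun Y Y' => ?_) hf.1 (ENNReal.one_le_ofReal.2 hq)
    ofReal_ne_top, ?_⟩
  · rw [abs_of_pos (Real.exp_pos _), abs_sub_comm]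
    exact (Real.exp_le_exp.2 (neg_le_neg (mul_abs_sub_le_abs_intervalIntegral hg_int hg_lower
      Y Y'))).trans (exp_neg_mul_abs_le_min_one_exp hc.le hβ _)
  · rw [integral_min_one_exp_mul_sub_abs hc hβ]
    field_simp
    ring

/-- Singular-integral estimate (Lemma 5.2): under `1/D₁ ≤ ξ ≤ D₁`, `|v| ≤ 5π/6` a.e. and
weighted energy bound `∫ ξ sin²(v/2) cos^{2λ}(v/2) ≤ E₀`, the operator
`(Λf)(Y) = ∫ exp(−|∫_Y^{Y'} cos^k(v/2)ξ|) f(Y') dY'` satisfies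
`‖Λf‖_{L^q} ≤ ‖h‖_{L¹}·‖f‖_{L^q}` with `h(z) = min{1, exp((α/D₁)(β − |z|))}`,
`α = cos^{2(λ+1)}(5π/12)`, `β = (18·4^λ/(2−√3)^λ)·D₁E₀`, and
`‖h‖_{L¹} = (36·4^λ/(2−√3)^λ)·D₁E₀ + 2D₁/α`. -/
theorem singular_integral_estimate_weighted (lam k : ℕ) (hlam : 1 ≤ lam)
    (hk : k = 2 * (lam + 1)) (q D₁ E₀ : ℝ) (hq : 1 ≤ q) (hD : 1 ≤ D₁) (hE : 0 < E₀)
    (f v ξ : ℝ → ℝ) (hf : MemLp f (ENNReal.ofReal q) (volume : Measure ℝ))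
    (hv : Measurable v) (hξ : Measurable ξ)
    (hξbd : ∀ᵐ Y ∂(volume : Measure ℝ), 1 / D₁ ≤ ξ Y ∧ ξ Y ≤ D₁)
    (hvbd : ∀ᵐ Y ∂(volume : Measure ℝ), |v Y| ≤ 5 * Real.pi / 6)
    (hen : (∫ Y : ℝ, ξ Y * Real.sin (v Y / 2) ^ 2 * Real.cos (v Y / 2) ^ (2 * lam)) ≤ E₀) :
    eLpNorm (fun Y : ℝ => ∫ Y' : ℝ,
        Real.exp (-|∫ s in Y..Y', Real.cos (v s / 2) ^ k * ξ s|) * f Y')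
      (ENNReal.ofReal q) (volume : Measure ℝ)
      ≤ ENNReal.ofReal
          (∫ z : ℝ, min 1 (Real.exp ((Real.cos (5 * Real.pi / 12) ^ (2 * (lam + 1)) / D₁)
            * ((18 * 4 ^ lam / (2 - Real.sqrt 3) ^ lam) * D₁ * E₀ - |z|))))
        * eLpNorm f (ENNReal.ofReal q) (volume : Measure ℝ) ∧
    (∫ z : ℝ, min 1 (Real.exp ((Real.cos (5 * Real.pi / 12) ^ (2 * (lam + 1)) / D₁)
        * ((18 * 4 ^ lam / (2 - Real.sqrt 3) ^ lam) * D₁ * E₀ - |z|))))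
      = (36 * 4 ^ lam / (2 - Real.sqrt 3) ^ lam) * D₁ * E₀
        + 2 * D₁ / Real.cos (5 * Real.pi / 12) ^ (2 * (lam + 1)) :=
  singular_integral_estimate_weighted_general lam k hk q D₁ E₀ hq hD hE f v ξ hf hv hξ hξbd hvbd
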